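/- If g₁ and g₂ are independent gain functions (g = g₁·g₂ pointwise) then for a product prior π₁ × π₂, the g-leakage of the parallel composition equals the sum of component g-leakages: I_g(π₁ × π₂, C₁ × C₂) = I_{g₁}(π₁, C₁) + I_{g₂}(π₂, C₂). -/
import Mathlib


open Finset

namespace QIF7

/-- Prior g-vulnerability. -/
noncomputable def Vg {X W : Type*} [Fintype X] [Fintype W] [Nonempty W]
    (π : X → ℝ) (g : W → X → ℝ) : ℝ :=
  Finset.univ.sup' Finset.univ_nonempty fun w => ∑ x, π x * g w x

/-- Posterior g-vulnerability. -/
noncomputable def VgPost {X Y W : Type*} [Fintype X] [Fintype Y] [Fintype W] [Nonempty W]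
    (π : X → ℝ) (C : X → Y → ℝ) (g : W → X → ℝ) : ℝ :=
  ∑ y, Finset.univ.sup' Finset.univ_nonempty fun w => ∑ x, π x * C x y * g w x

/-- g-leakage `I_g(π,C) = log (V_g(π,C) / V_g(π))` (in bits). -/
noncomputable def Ig {X Y W : Type*} [Fintype X] [Fintype Y] [Fintype W] [Nonempty W]
    (π : X → ℝ) (C : X → Y → ℝ) (g : W → X → ℝ) : ℝ :=
  Real.logb 2 (VgPost π C g / Vg π g)

noncomputable def parC {X₁ X₂ Y₁ Y₂ : Type*}
    (C₁ : X₁ → Y₁ → ℝ) (C₂ : X₂ → Y₂ → ℝ) : X₁ × X₂ → Y₁ × Y₂ → ℝ :=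
  fun p q => C₁ p.1 q.1 * C₂ p.2 q.2

noncomputable def prodPrior {X₁ X₂ : Type*} (π₁ : X₁ → ℝ) (π₂ : X₂ → ℝ) :
    X₁ × X₂ → ℝ := fun p => π₁ p.1 * π₂ p.2

lemma sup'_mul_prod {W₁ W₂ : Type*} [Fintype W₁] [Fintype W₂] [Nonempty W₁] [Nonempty W₂]
    (f : W₁ → ℝ) (h : W₂ → ℝ) (hf : ∀ w, 0 ≤ f w) (hh : ∀ w, 0 ≤ h w) :
    (Finset.univ.sup' Finset.univ_nonempty fun p : W₁ × W₂ => f p.1 * h p.2) =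
      (Finset.univ.sup' Finset.univ_nonempty f) * (Finset.univ.sup' Finset.univ_nonempty h) := by
  apply le_antisymm
  · apply Finset.sup'_le
    intro p _
    exact mul_le_mul (Finset.le_sup' f (Finset.mem_univ p.1))
      (Finset.le_sup' h (Finset.mem_univ p.2)) (hh p.2)
      (le_trans (hf p.1) (Finset.le_sup' f (Finset.mem_univ p.1)))
  · obtain ⟨w₁, _, h1⟩ := Finset.exists_mem_eq_sup' (Finset.univ_nonempty (α := W₁)) f
    obtain ⟨w₂, _, h2⟩ := Finset.exists_mem_eq_sup' (Finset.univ_nonempty (α := W₂)) h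
    rw [h1, h2]
    exact Finset.le_sup' (fun p : W₁ × W₂ => f p.1 * h p.2) (Finset.mem_univ (w₁, w₂))

/-- For independent gain functions and a product prior, g-leakage is additive under
parallel composition: `I_g(π₁ × π₂, C₁ × C₂) = I_{g₁}(π₁,C₁) + I_{g₂}(π₂,C₂)`. -/
theorem g_leakage_parallel_additive {X₁ X₂ Y₁ Y₂ W₁ W₂ : Type*}
    [Fintype X₁] [Fintype X₂] [Fintype Y₁] [Fintype Y₂] [Fintype W₁] [Fintype W₂]
    [Nonempty X₁] [Nonempty X₂] [Nonempty W₁] [Nonempty W₂]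
    (π₁ : X₁ → ℝ) (π₂ : X₂ → ℝ) (C₁ : X₁ → Y₁ → ℝ) (C₂ : X₂ → Y₂ → ℝ)
    (g₁ : W₁ → X₁ → ℝ) (g₂ : W₂ → X₂ → ℝ) (g : W₁ × W₂ → X₁ × X₂ → ℝ)
    (hπ₁0 : ∀ x, 0 ≤ π₁ x) (hπ₁1 : ∑ x, π₁ x = 1)
    (hπ₂0 : ∀ x, 0 ≤ π₂ x) (hπ₂1 : ∑ x, π₂ x = 1)
    (hC₁0 : ∀ x y, 0 ≤ C₁ x y) (hC₁1 : ∀ x, ∑ y, C₁ x y = 1)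
    (hC₂0 : ∀ x y, 0 ≤ C₂ x y) (hC₂1 : ∀ x, ∑ y, C₂ x y = 1)
    (hg₁ : ∀ w x, g₁ w x ∈ Set.Icc (0:ℝ) 1)
    (hg₂ : ∀ w x, g₂ w x ∈ Set.Icc (0:ℝ) 1)
    (hindep : ∀ w₁ w₂ x₁ x₂, g (w₁, w₂) (x₁, x₂) = g₁ w₁ x₁ * g₂ w₂ x₂)
    (hV₁ : 0 < Vg π₁ g₁) (hVp₁ : 0 < VgPost π₁ C₁ g₁)
    (hV₂ : 0 < Vg π₂ g₂) (hVp₂ : 0 < VgPost π₂ C₂ g₂) :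
    Ig (prodPrior π₁ π₂) (parC C₁ C₂) g = Ig π₁ C₁ g₁ + Ig π₂ C₂ g₂ := by
  have hVeq : Vg (prodPrior π₁ π₂) g = Vg π₁ g₁ * Vg π₂ g₂ := by
    unfold Vg
    have : (fun w : W₁ × W₂ => ∑ x : X₁ × X₂, prodPrior π₁ π₂ x * g w x) =
        fun w : W₁ × W₂ => (∑ x₁, π₁ x₁ * g₁ w.1 x₁) * (∑ x₂, π₂ x₂ * g₂ w.2 x₂) := by
      funext w
      rw [Fintype.sum_prod_type, Finset.sum_mul_sum]
      refine Finset.sum_congr rfl fun x₁ _ => Finset.sum_congr rfl fun x₂ _ => ?_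
      rw [show g w (x₁, x₂) = g₁ w.1 x₁ * g₂ w.2 x₂ from hindep w.1 w.2 x₁ x₂]
      unfold prodPrior; ring
    rw [this]
    exact sup'_mul_prod _ _
      (fun w => Finset.sum_nonneg fun x _ => mul_nonneg (hπ₁0 x) (hg₁ w x).1)
      (fun w => Finset.sum_nonneg fun x _ => mul_nonneg (hπ₂0 x) (hg₂ w x).1)
  have hVpeq : VgPost (prodPrior π₁ π₂) (parC C₁ C₂) g = VgPost π₁ C₁ g₁ * VgPost π₂ C₂ g₂ := by
    unfold VgPost
    rw [Fintype.sum_prod_type, Finset.sum_mul_sum]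
    refine Finset.sum_congr rfl fun y₁ _ => Finset.sum_congr rfl fun y₂ _ => ?_
    have : (fun w : W₁ × W₂ => ∑ x : X₁ × X₂,
        prodPrior π₁ π₂ x * parC C₁ C₂ x (y₁, y₂) * g w x) =
        fun w : W₁ × W₂ => (∑ x₁, π₁ x₁ * C₁ x₁ y₁ * g₁ w.1 x₁) *
          (∑ x₂, π₂ x₂ * C₂ x₂ y₂ * g₂ w.2 x₂) := by
      funext w
      rw [Fintype.sum_prod_type, Finset.sum_mul_sum]
      refine Finset.sum_congr rfl fun x₁ _ => Finset.sum_congr rfl fun x₂ _ => ?_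
      rw [show g w (x₁, x₂) = g₁ w.1 x₁ * g₂ w.2 x₂ from hindep w.1 w.2 x₁ x₂]
      unfold prodPrior parC; ring
    rw [this]
    exact sup'_mul_prod _ _
      (fun w => Finset.sum_nonneg fun x _ =>
        mul_nonneg (mul_nonneg (hπ₁0 x) (hC₁0 x y₁)) (hg₁ w x).1)
      (fun w => Finset.sum_nonneg fun x _ =>
        mul_nonneg (mul_nonneg (hπ₂0 x) (hC₂0 x y₂)) (hg₂ w x).1)
  unfold Ig
  rw [hVeq, hVpeq, show VgPost π₁ C₁ g₁ * VgPost π₂ C₂ g₂ / (Vg π₁ g₁ * Vg π₂ g₂) =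
      (VgPost π₁ C₁ g₁ / Vg π₁ g₁) * (VgPost π₂ C₂ g₂ / Vg π₂ g₂) from
      (div_mul_div_comm _ _ _ _).symm,
    Real.logb_mul (ne_of_gt (div_pos hVp₁ hV₁)) (ne_of_gt (div_pos hVp₂ hV₂))]

end QIF7
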